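/- arXiv:2605.19906 — 8 statements merged into one kernel-verified Lean document; each statement's English description precedes it below -/
import Mathlib

section
/- Fix c ∈ ℝ and define M : ℝ → ℝ by M(φ) = −3(c−φ)⁴ − 3φ(2c−φ)² − φ³. If β ∈ (−2c³/3, 1/6 − 2c³/3), then the equation M(φ) = 6β has exactly two solutions φ₁, φ₂ in the interval (−∞, c), and they satisfy φ₁ < c−1 < φ₂ < c. -/
open Set

private lemma gmono {a b : ℝ} (ha : 0 ≤ a) (hab : a < b) (hb : b ≤ 1) :
    -3*a^4+4*a^3 < -3*b^4+4*b^3 := by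
  have hu : (0:ℝ) < b - a := sub_pos.2 hab
  have ha1 : (0:ℝ) ≤ 1 - a := by linarith
  have hb1 : (0:ℝ) ≤ 1 - b := by linarith
  have hb0 : (0:ℝ) ≤ b := by linarith
  nlinarith [mul_nonneg (mul_nonneg hu.le (sq_nonneg a)) ha1,
    mul_nonneg (mul_nonneg hu.le (sq_nonneg b)) hb1,
    mul_nonneg (mul_nonneg (mul_nonneg hu.le ha) hb0) ha1,
    mul_nonneg (mul_nonneg (mul_nonneg hu.le ha) hb0) hb1,
    pow_pos hu 3]

private lemma ganti {a b : ℝ} (ha : 1 ≤ a) (hab : a < b) :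
    -3*b^4+4*b^3 < -3*a^4+4*a^3 := by
  have hs : (0:ℝ) ≤ a - 1 := by linarith
  have hu : (0:ℝ) < b - a := sub_pos.2 hab
  have key : (-3*a^4+4*a^3) - (-3*b^4+4*b^3)
      = (b-a)*(12*(a-1)+24*(a-1)^2+12*(a-1)^3+6*(b-a)+24*(a-1)*(b-a)
        +18*(a-1)^2*(b-a)+8*(b-a)^2+12*(a-1)*(b-a)^2+3*(b-a)^3) := by ring
  have hin : 0 < 12*(a-1)+24*(a-1)^2+12*(a-1)^3+6*(b-a)+24*(a-1)*(b-a)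
        +18*(a-1)^2*(b-a)+8*(b-a)^2+12*(a-1)*(b-a)^2+3*(b-a)^3 := by
    nlinarith [mul_nonneg hs hs, mul_nonneg (mul_nonneg hs hs) hs,
      mul_nonneg hs hu.le, mul_nonneg (mul_nonneg hs hs) hu.le,
      mul_nonneg hu.le hu.le, mul_nonneg hs (mul_nonneg hu.le hu.le),
      mul_nonneg (mul_nonneg hu.le hu.le) hu.le]
  nlinarith [mul_pos hu hin]

/-- For `β ∈ (−2c³/3, 1/6 − 2c³/3)`, the equation `M(φ) = 6β` with
`M(φ) = −3(c−φ)⁴ − 3φ(2c−φ)² − φ³` has exactly two solutions in `(−∞, c)`,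
one on each side of `c − 1`, the larger one below `c`. -/
theorem stmt1 (c β : ℝ) (M : ℝ → ℝ)
    (hM : ∀ φ, M φ = -3*(c-φ)^4 - 3*φ*(2*c-φ)^2 - φ^3)
    (hβ : β ∈ Ioo (-2*c^3/3) (1/6 - 2*c^3/3)) :
    ∃ φ₁ φ₂ : ℝ, φ₁ < c - 1 ∧ c - 1 < φ₂ ∧ φ₂ < c ∧
      M φ₁ = 6*β ∧ M φ₂ = 6*β ∧
      ∀ φ < c, M φ = 6*β → (φ = φ₁ ∨ φ = φ₂) := by
  obtain ⟨hβ1, hβ2⟩ := hβ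
  set g : ℝ → ℝ := fun t => -3*t^4+4*t^3 with hg
  have hgc : Continuous g := by fun_prop
  set y : ℝ := 6*β + 4*c^3 with hy
  have hy0 : 0 < y := by simp only [hy]; linarith
  have hy1 : y < 1 := by simp only [hy]; linarith
  have hMf : ∀ φ, M φ = g (c - φ) - 4*c^3 := by
    intro φ; rw [hM]; simp only [hg]; ring
  -- t₂ ∈ (0,1) with g t₂ = y
  have h2 : y ∈ g '' Ioo (0:ℝ) 1 := by
    apply intermediate_value_Ioo (by norm_num) hgc.continuousOn
    constructor <;> simp only [hg] <;> norm_num <;> linarith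
  -- t₁ ∈ (1,2) with g t₁ = y
  have h1 : y ∈ g '' Ioo (1:ℝ) 2 := by
    apply intermediate_value_Ioo' (by norm_num) hgc.continuousOn
    constructor <;> simp only [hg] <;> norm_num <;> linarith
  obtain ⟨t₂, ⟨ht20, ht21⟩, hgt2⟩ := h2
  obtain ⟨t₁, ⟨ht11, ht12⟩, hgt1⟩ := h1
  refine ⟨c - t₁, c - t₂, by linarith, by linarith, by linarith, ?_, ?_, ?_⟩
  · rw [hMf]; simp only [sub_sub_cancel]; rw [hgt1]; simp only [hy]; ring
  · rw [hMf]; simp only [sub_sub_cancel]; rw [hgt2]; simp only [hy]; ring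
  · intro φ hφ hMφ
    have ht0 : 0 < c - φ := by linarith
    have hgt : g (c - φ) = y := by
      have := hMf φ; rw [hMφ] at this; simp only [hy]; linarith
    have e0 : -3*(c-φ)^4+4*(c-φ)^3 = y := hgt
    have e1 : -3*t₁^4+4*t₁^3 = y := hgt1
    have e2 : -3*t₂^4+4*t₂^3 = y := hgt2
    rcases lt_trichotomy (c - φ) 1 with h | h | h
    · right
      have : c - φ = t₂ := by
        rcases lt_trichotomy (c - φ) t₂ with h' | h' | h'
        · exfalso; have := gmono ht0.le h' ht21.le; linarith
        · exact h'
        · exfalso; have := gmono ht20.le h' h.le; linarith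
      linarith
    · exfalso
      rw [h] at e0; norm_num at e0; linarith
    · left
      have : c - φ = t₁ := by
        rcases lt_trichotomy (c - φ) t₁ with h' | h' | h'
        · exfalso; have := ganti h.le h'; linarith
        · exact h'
        · exfalso; have := ganti ht11.le h'; linarith
      linarith
end

section
/- Fix c ∈ ℝ and define β(k) = −(c−k)⁴/2 − k(2c−k)²/2 − k³/6. If k ∈ (c − 4/3, c − 1), then −2c³/3 < β(k) < 1/6 − 2c³/3. -/
open Set

/-- For `k ∈ (c − 4/3, c − 1)`, the integration constant
`β(k) = −(c−k)⁴/2 − k(2c−k)²/2 − k³/6` lies in `(−2c³/3, 1/6 − 2c³/3)`. -/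
theorem stmt2 (c k : ℝ) (hk : k ∈ Ioo (c - 4/3) (c - 1)) :
    -2*c^3/3 < -(c-k)^4/2 - k*(2*c-k)^2/2 - k^3/6 ∧
    -(c-k)^4/2 - k*(2*c-k)^2/2 - k^3/6 < 1/6 - 2*c^3/3 := by
  obtain ⟨h1, h2⟩ := hk
  have ht1 : (1 : ℝ) < c - k := by linarith
  have ht2 : c - k < 4/3 := by linarith
  constructor
  · nlinarith [mul_pos (mul_pos (mul_pos (by linarith : (0:ℝ) < c - k)
      (by linarith : (0:ℝ) < c - k)) (by linarith : (0:ℝ) < c - k))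
      (by linarith : (0:ℝ) < 4 - 3*(c - k))]
  · nlinarith [mul_nonneg (sq_nonneg (c - k - 1))
      (by nlinarith : (0:ℝ) ≤ 3*(c-k)^2 + 2*(c-k) + 1)]
end

section
/- Fix c ∈ ℝ. There exists a function φ₀ ∈ C^∞(ℝ), even, strictly positive, non-constant, with φ₀′(0) = 0, φ₀(x) → 0 as |x| → ∞, satisfying (1/2)(c − φ₀(x))²(φ₀′(x))² = (1/8)φ₀(x)²·(φ₀(x)² − (4c − 8/3)φ₀(x) + 4c(c−1)) for all x, and c − 4/3 < φ₀(x) < c for all x, with sup over x of φ₀(x) equal to φ₀max := 2c − 4/3 − (2/3)√(4 − 3c), attained at x = 0, if and only if c ∈ (1, 4/3). -/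
open Set Filter

open FormalMultilinearSeries
open scoped ContDiff



lemma FW.exists_global_solution {v : ℝ → ℝ} {L : NNReal} (hl : LipschitzWith L v)
    {C : ℝ} (hC : 0 < C) (hb : ∀ x, |v x| ≤ C) (a : ℝ) :
    ∃ w : ℝ → ℝ, w 0 = a ∧ ∀ x, HasDerivAt w (v (w x)) x := by
  have key : ∀ n : ℕ, ∃ f : ℝ → ℝ, f 0 = a ∧
      ∀ t ∈ Icc (-(n+1:ℝ)) (n+1), HasDerivWithinAt f (v (f t)) (Icc (-(n+1:ℝ)) (n+1)) t := by
    intro n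
    have hn1 : (0:ℝ) < n + 1 := by positivity
    have hpl : IsPicardLindelof (fun _ x => v x) (tmin := -(n+1:ℝ)) (tmax := n+1)
        ⟨0, by constructor <;> linarith⟩ a (Real.toNNReal (C*(n+1))) 0 (Real.toNNReal C) L := by
      constructor
      · exact fun t _ => hl.lipschitzOnWith
      · exact fun x _ => continuousOn_const
      · intro t _ x _
        rw [Real.coe_toNNReal _ hC.le]
        simpa [Real.norm_eq_abs] using hb x
      · simp only [Real.coe_toNNReal _ hC.le, NNReal.coe_zero, tsub_zero, sub_zero]
        rw [Real.coe_toNNReal _ (mul_nonneg hC.le hn1.le)]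
        have : max ((n+1:ℝ)) (0 - -(n+1)) = (n+1:ℝ) := by
          rw [zero_sub, neg_neg, max_self]
        exact le_of_eq (congrArg (fun y => C * y) this)
    exact hpl.exists_eq_forall_mem_Icc_hasDerivWithinAt₀
  choose F hF0 hFd using key
  have hFd' : ∀ n : ℕ, ∀ t ∈ Ioo (-(n+1:ℝ)) (n+1), HasDerivAt (F n) (v (F n t)) t := by
    intro n t ht
    exact (hFd n t (Ioo_subset_Icc_self ht)).hasDerivAt (Icc_mem_nhds ht.1 ht.2)
  have heq : ∀ n n' : ℕ, n ≤ n' → EqOn (F n) (F n') (Ioo (-(n+1:ℝ)) (n+1)) := by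
    intro n n' hnn
    have hcast : (n:ℝ) ≤ n' := Nat.cast_le.2 hnn
    have hsub : Ioo (-(n+1:ℝ)) (n+1) ⊆ Ioo (-(n'+1:ℝ)) (n'+1) :=
      Ioo_subset_Ioo (by linarith) (by linarith)
    have hn1 : (0:ℝ) < n + 1 := by positivity
    have h0 : (0:ℝ) ∈ Ioo (-(n+1:ℝ)) (n+1) := ⟨by linarith, hn1⟩
    apply ODE_solution_unique_of_mem_Ioo (v := fun _ x => v x) (s := fun _ => (univ : Set ℝ))
      (fun _ _ => hl.lipschitzOnWith) h0
      (fun t ht => ⟨hFd' n t ht, trivial⟩)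
      (fun t ht => ⟨hFd' n' t (hsub ht), trivial⟩)
    rw [hF0 n, hF0 n']
  set w : ℝ → ℝ := fun x => F (Nat.floor |x|) x with hw
  have hwF : ∀ (n : ℕ) (x : ℝ), |x| < n+1 → w x = F n x := by
    intro n x hx
    have hx1 : x ∈ Ioo (-(Nat.floor |x| + 1:ℝ)) (Nat.floor |x| + 1) := by
      rw [mem_Ioo, ← abs_lt]
      exact Nat.lt_floor_add_one _
    have hx2 : x ∈ Ioo (-(n+1:ℝ)) (n+1) := by rw [mem_Ioo, ← abs_lt]; exact hx
    rcases le_total (Nat.floor |x|) n with h | h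
    · exact heq _ _ h hx1
    · exact (heq _ _ h hx2).symm
  refine ⟨w, ?_, ?_⟩
  · have : w 0 = F 0 0 := hwF 0 0 (by norm_num)
    rw [this, hF0]
  · intro x
    set n := Nat.floor |x|
    have hx : x ∈ Ioo (-(n+1:ℝ)) (n+1) := by
      rw [mem_Ioo, ← abs_lt]; exact Nat.lt_floor_add_one _
    have hev : w =ᶠ[nhds x] F n := by
      filter_upwards [isOpen_Ioo.mem_nhds hx] with y hy
      exact hwF n y (abs_lt.2 hy)
    have := (hFd' n x hx).congr_of_eventuallyEq hev
    rwa [hwF n x (abs_lt.2 hx)]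
open FormalMultilinearSeries

lemma FW.exists_analyticAt_antideriv {g : ℝ → ℝ} {u₀ : ℝ} (hg : AnalyticAt ℝ g u₀) :
    ∃ H : ℝ → ℝ, AnalyticAt ℝ H u₀ ∧ ∀ᶠ u in nhds u₀, HasDerivAt H (g u) u := by
  obtain ⟨p, hp⟩ := hg
  obtain ⟨r, hr⟩ := hp
  obtain ⟨ρ, hρ0, hρr⟩ := ENNReal.lt_iff_exists_nnreal_btwn.mp hr.r_pos
  have hρpos : (0:ℝ) < ρ := by exact_mod_cast hρ0
  set a : ℕ → ℝ := fun n => p.coeff n with ha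
  have hsum : Summable fun n => |a n| * (ρ:ℝ)^n := by
    have := p.summable_norm_mul_pow (lt_of_lt_of_le hρr hr.r_le)
    simpa [norm_apply_eq_norm_coef, Real.norm_eq_abs] using this
  set b : ℕ → ℝ := fun n => match n with | 0 => 0 | (k+1) => a k / (k+1) with hb
  set B : ℕ → ℝ := fun n => match n with | 0 => 0 | (k+1) => (ρ:ℝ) * (|a k| * (ρ:ℝ)^k) with hB
  have hBsum : Summable B := by
    rw [← summable_nat_add_iff 1]
    exact (hsum.mul_left _).congr fun n => rfl
  have habs : ∀ (n : ℕ) (y : ℝ), |y| ≤ ρ → |b n * y^n| ≤ B n := by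
    intro n y hy
    match n with
    | 0 => simp [hb, hB]
    | (k+1) =>
      have h1 : |b (k+1)| ≤ |a k| := by
        rw [hb]
        simp only [abs_div]
        rw [div_le_iff₀ (by positivity)]
        have : (1:ℝ) ≤ |(k:ℝ)+1| := by
          rw [abs_of_pos (by positivity)]
          linarith [Nat.cast_nonneg (α := ℝ) k]
        nlinarith [abs_nonneg (a k)]
      have h2 : |y^(k+1)| ≤ (ρ:ℝ)^(k+1) := by
        rw [abs_pow]
        exact pow_le_pow_left₀ (abs_nonneg y) hy _
      rw [abs_mul, hB]
      calc |b (k+1)| * |y^(k+1)| ≤ |a k| * (ρ:ℝ)^(k+1) := by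
            apply mul_le_mul h1 h2 (abs_nonneg _) (abs_nonneg _)
        _ = (ρ:ℝ) * (|a k| * (ρ:ℝ)^k) := by ring
  have hsummableb : ∀ y : ℝ, |y| ≤ ρ → Summable fun n => b n * y^n := by
    intro y hy
    exact Summable.of_norm_bounded hBsum fun n => by
      rw [Real.norm_eq_abs]; exact habs n y hy
  set H : ℝ → ℝ := fun u => ∑' n, b n * (u - u₀)^n with hH
  set t : Set ℝ := Metric.ball u₀ ρ with ht
  -- On t, H equals the shifted sum
  have hHeq : ∀ u ∈ t, H u = ∑' n, b (n+1) * (u - u₀)^(n+1) := by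
    intro u hu
    have hy : |u - u₀| ≤ ρ := by
      rw [ht, Metric.mem_ball, Real.dist_eq] at hu
      exact le_of_lt hu
    rw [hH]
    have := Summable.tsum_eq_zero_add (hsummableb _ hy)
    simpa [hb] using this
  -- derivative of each term
  have hderiv_each : ∀ (n : ℕ) (u : ℝ),
      HasDerivAt (fun z => b (n+1) * (z - u₀)^(n+1)) (a n * (u - u₀)^n) u := by
    intro n u
    have h1 : HasDerivAt (fun z : ℝ => (z - u₀)^(n+1))
        ((n+1 : ℕ) * (u - u₀)^n * 1) u := by
      have := ((hasDerivAt_id u).sub_const u₀).fun_pow (n+1)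
      simpa using this
    have := h1.const_mul (b (n+1))
    refine this.congr_deriv ?_
    rw [hb]
    push_cast
    field_simp
  have hgsum : ∀ u ∈ t, HasSum (fun n => a n * (u - u₀)^n) (g u) := by
    intro u hu
    have hy : (u - u₀) ∈ Metric.eball (0:ℝ) r := by
      rw [Metric.mem_eball, edist_zero_right]
      calc (‖u - u₀‖₊ : ENNReal) < (ρ : ENNReal) := by
            rw [ht, Metric.mem_ball, Real.dist_eq] at hu
            exact_mod_cast hu
        _ < r := hρr
    have := hr.hasSum hy
    simp only [apply_eq_pow_smul_coeff, smul_eq_mul] at this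
    rw [add_sub_cancel] at this
    convert this using 2 with n
    · rfl
    ring
  -- main derivative statement on t
  have hkey : ∀ u ∈ t, HasDerivAt H (g u) u := by
    intro u hu
    have h1 : HasDerivAt (fun z => ∑' n, b (n+1) * (z - u₀)^(n+1))
        (∑' n, a n * (u - u₀)^n) u := by
      apply hasDerivAt_tsum_of_isPreconnected hsum Metric.isOpen_ball
        (convex_ball u₀ (ρ:ℝ)).isPreconnected
        (fun n y _ => hderiv_each n y) ?_ (Metric.mem_ball_self hρpos) ?_ hu
      · intro n y hy
        rw [Real.norm_eq_abs, abs_mul, abs_pow]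
        have hyρ : |y - u₀| ≤ ρ := by
          rw [Metric.mem_ball, Real.dist_eq] at hy
          exact le_of_lt hy
        have := pow_le_pow_left₀ (abs_nonneg _) hyρ n
        nlinarith [abs_nonneg (a n), pow_nonneg (abs_nonneg (y - u₀)) n]
      · apply summable_zero.congr
        intro n
        simp
    have h2 : HasDerivAt H (∑' n, a n * (u - u₀)^n) u := by
      apply h1.congr_of_eventuallyEq
      filter_upwards [Metric.isOpen_ball.mem_nhds hu] with z hz
      exact hHeq z hz
    rwa [(hgsum u hu).tsum_eq] at h2
  have hcoeff : ∀ n, (FormalMultilinearSeries.ofScalars ℝ b).coeff n = b n := by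
    intro n
    have h := FormalMultilinearSeries.ofScalars_apply_eq (E := ℝ) b (1:ℝ) n
    rw [one_pow, smul_eq_mul, mul_one] at h
    exact h
  refine ⟨H, ?_, ?_⟩
  · refine ⟨FormalMultilinearSeries.ofScalars ℝ b, hasFPowerSeriesAt_iff.2 ?_⟩
    filter_upwards [Metric.ball_mem_nhds (0:ℝ) hρpos] with z hz
    have hz' : |z| ≤ ρ := by
      rw [Metric.mem_ball, Real.dist_eq, sub_zero] at hz
      exact le_of_lt hz
    have hs : Summable fun n => z^n • (FormalMultilinearSeries.ofScalars ℝ b).coeff n := by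
      apply (hsummableb z hz').congr
      intro n
      rw [hcoeff, smul_eq_mul, mul_comm]
    rw [hs.hasSum_iff]
    have : H (u₀ + z) = ∑' n, b n * z^n := by
      rw [hH]; simp [add_sub_cancel_left]
    rw [this]
    apply tsum_congr
    intro n
    rw [hcoeff, smul_eq_mul, mul_comm]
  · filter_upwards [Metric.ball_mem_nhds u₀ hρpos] with u hu
    exact hkey u hu



lemma FW.analyticAt_of_ode {v w : ℝ → ℝ} {x₀ : ℝ}
    (hw : ∀ x, HasDerivAt w (v (w x)) x)
    (hH : ∃ H : ℝ → ℝ, AnalyticAt ℝ H (w x₀) ∧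
      ∀ᶠ u in nhds (w x₀), HasDerivAt H ((v u)⁻¹) u)
    (hvc : ContinuousAt v (w x₀)) (hv0 : v (w x₀) ≠ 0) :
    AnalyticAt ℝ w x₀ := by
  obtain ⟨H, hHa, hHd⟩ := hH
  set u₀ := w x₀ with hu₀
  have hwc : ContinuousAt w x₀ := (hw x₀).continuousAt
  have hH0 : HasDerivAt H ((v u₀)⁻¹) u₀ := hHd.self_of_nhds
  have hne : (v u₀)⁻¹ ≠ 0 := inv_ne_zero hv0
  have hstrict : HasStrictDerivAt H ((v u₀)⁻¹) u₀ := by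
    have h1 : HasStrictDerivAt H (deriv H u₀) u₀ :=
      ((hHa.contDiffAt (n := 1)).hasStrictDerivAt one_ne_zero)
    rwa [hH0.deriv] at h1
  set Φ := (hstrict.hasStrictFDerivAt_equiv hne).toOpenPartialHomeomorph H with hΦ
  have hΦcoe : (Φ : ℝ → ℝ) = H :=
    (hstrict.hasStrictFDerivAt_equiv hne).toOpenPartialHomeomorph_coe
  have hΦtarget : H u₀ ∈ Φ.target :=
    (hstrict.hasStrictFDerivAt_equiv hne).image_mem_toOpenPartialHomeomorph_target
  have hleft : ∀ᶠ u in nhds u₀, Φ.symm (H u) = u :=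
    (hstrict.hasStrictFDerivAt_equiv hne).eventually_left_inverse
  have hΦsymm_u₀ : Φ.symm (H u₀) = u₀ := hleft.self_of_nhds
  -- K = H ∘ w has derivative 1 near x₀
  have hK : ∀ᶠ x in nhds x₀, HasDerivAt (fun y => H (w y)) 1 x := by
    filter_upwards [hwc.tendsto.eventually hHd,
      hwc.tendsto.eventually (hvc.eventually_ne hv0)] with x h1 h2
    have := (h1.comp x (hw x))
    simpa [Function.comp_def, inv_mul_cancel₀ h2] using this
  -- hence K x = x - x₀ + H u₀ near x₀
  obtain ⟨ε, hε, hball⟩ := Metric.eventually_nhds_iff.mp hK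
  have hKeq : ∀ᶠ x in nhds x₀, H (w x) = x - x₀ + H u₀ := by
    have h0 : x₀ ∈ Ioo (x₀ - ε) (x₀ + ε) := by constructor <;> linarith
    have huniq : EqOn (fun y => H (w y)) (fun y => y - x₀ + H u₀) (Ioo (x₀ - ε) (x₀ + ε)) := by
      apply ODE_solution_unique_of_mem_Ioo (v := fun _ _ => (1:ℝ))
        (s := fun _ => (univ : Set ℝ))
        (fun _ _ => (LipschitzWith.const (1:ℝ)).lipschitzOnWith) h0
      · intro t ht
        refine ⟨hball ?_, trivial⟩
        rw [Real.dist_eq, abs_lt]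
        constructor <;> [linarith [ht.1]; linarith [ht.2]]
      · intro t ht
        refine ⟨?_, trivial⟩
        simpa using ((hasDerivAt_id t).sub_const x₀).add_const (H u₀)
      · simp; rfl
    filter_upwards [isOpen_Ioo.mem_nhds h0] with x hx
    exact huniq hx
  -- w equals Φ.symm ∘ affine near x₀
  have hweq : w =ᶠ[nhds x₀] fun x => Φ.symm (x - x₀ + H u₀) := by
    filter_upwards [hwc.tendsto.eventually hleft, hKeq] with x h1 h2
    rw [← h2, h1]
  -- analyticity of the right-hand side
  have hsymm : ContDiffAt ℝ ω Φ.symm (H u₀) := by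
    apply Φ.contDiffAt_symm_deriv hne (by exact hΦtarget)
    · rw [hΦsymm_u₀, hΦcoe]; exact hH0
    · rw [hΦsymm_u₀, hΦcoe]; exact hHa.contDiffAt
  have haff : ContDiffAt ℝ ω (fun x : ℝ => x - x₀ + H u₀) x₀ :=
    ((contDiffAt_id.sub contDiffAt_const).add contDiffAt_const)
  have hcomp : ContDiffAt ℝ ω (fun x => Φ.symm (x - x₀ + H u₀)) x₀ := by
    have : (x₀ - x₀ + H u₀) = H u₀ := by ring
    exact (this ▸ hsymm).comp x₀ haff
  exact (hcomp.congr_of_eventuallyEq hweq).analyticAt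

set_option maxHeartbeats 2000000 in
lemma FW.construction (c : ℝ) (hc1 : 1 < c) (hc2 : c < 4/3) :
    ∃ φ : ℝ → ℝ, ContDiff ℝ (⊤ : ℕ∞) φ ∧
      (∀ x, φ (-x) = φ x) ∧
      (∀ x, 0 < φ x) ∧
      (¬ ∃ a, ∀ x, φ x = a) ∧
      deriv φ 0 = 0 ∧
      Tendsto φ (cocompact ℝ) (nhds 0) ∧
      (∀ x, (1/2)*(c - φ x)^2*(deriv φ x)^2
        = (1/8)*(φ x)^2*((φ x)^2 - (4*c - 8/3)*(φ x) + 4*c*(c-1))) ∧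
      (∀ x, c - 4/3 < φ x ∧ φ x < c) ∧
      (∀ x, φ x ≤ 2*c - 4/3 - (2/3)*Real.sqrt (4 - 3*c)) ∧
      φ 0 = 2*c - 4/3 - (2/3)*Real.sqrt (4 - 3*c) := by
  have h43 : (0:ℝ) < 4 - 3*c := by linarith
  set s : ℝ := Real.sqrt (4 - 3*c) with hs_def
  have hs0 : 0 < s := Real.sqrt_pos.2 h43
  have hs2 : s^2 = 4 - 3*c := Real.sq_sqrt h43.le
  set m : ℝ := 2*c - 4/3 - (2/3)*s with hm_def
  have hm0 : 0 < m := by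
    rw [hm_def]
    nlinarith [hs2, hs0, mul_pos (show (0:ℝ) < c by linarith) (show (0:ℝ) < c - 1 by linarith)]
  set A : ℝ := (4/3)*s with hA_def
  set B : ℝ := c - m with hB_def
  have hA0 : 0 < A := by positivity
  have hB0 : 0 < B := by rw [hB_def, hm_def]; nlinarith
  -- the vector field
  set r : ℝ → ℝ := fun u => (m - u^2) * Real.sqrt (A + u^2) / (4*(B + u^2)) with hr_def
  set rt : ℝ → ℝ := fun u => Real.smoothTransition (m + 1 - u^2) * r u with hrt_def
  have hAu : ∀ u : ℝ, 0 < A + u^2 := fun u => by positivity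
  have hBu : ∀ u : ℝ, 0 < B + u^2 := fun u => by positivity
  clear_value s m A B
  have hrt_eq : ∀ u : ℝ, u^2 ≤ m → rt u = r u := by
    intro u hu
    rw [hrt_def]
    simp only []
    rw [Real.smoothTransition.one_of_one_le (by linarith), one_mul]
  have hrt0 : ∀ u : ℝ, m + 1 ≤ u^2 → rt u = 0 := by
    intro u hu
    rw [hrt_def]
    simp only []
    rw [Real.smoothTransition.zero_of_nonpos (by linarith), zero_mul]
  have hr_an : ∀ u : ℝ, ContDiffAt ℝ ω r u := by
    intro u
    have h1 : ContDiffAt ℝ ω (fun u : ℝ => A + u^2) u :=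
      (contDiffAt_const.add (contDiffAt_id.pow 2))
    have h2 : ContDiffAt ℝ ω (fun u : ℝ => Real.sqrt (A + u^2)) u :=
      (Real.contDiffAt_sqrt (hAu u).ne').comp u h1
    exact ((contDiffAt_const.sub (contDiffAt_id.pow 2)).mul h2).div
      (contDiffAt_const.mul (contDiffAt_const.add (contDiffAt_id.pow 2)))
      (by positivity)
  have hr_cont : Continuous r := by
    rw [continuous_iff_continuousAt]
    exact fun u => (hr_an u).continuousAt
  have hrt1 : ContDiff ℝ 1 rt := by
    apply ContDiff.mul
    · exact Real.smoothTransition.contDiff.comp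
        (contDiff_const.sub (contDiff_id.pow 2))
    · rw [contDiff_iff_contDiffAt]
      exact fun u => (hr_an u).of_le le_top
  have hrt_cont : Continuous rt := hrt1.continuous
  have hrt_diff : Differentiable ℝ rt := hrt1.differentiable one_ne_zero
  -- compact support
  have hsupp : HasCompactSupport rt := by
    apply HasCompactSupport.intro (isCompact_Icc (a := -Real.sqrt (m+1)) (b := Real.sqrt (m+1)))
    intro u hu
    apply hrt0
    by_contra hcon
    push_neg at hcon
    exact hu (abs_le.mp (Real.abs_le_sqrt hcon.le))
  obtain ⟨K, hK⟩ := (hsupp.deriv).exists_bound_of_continuous (contDiff_one_iff_deriv.mp hrt1).2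
  have hlip : LipschitzWith ‖K‖₊ rt := by
    apply lipschitzWith_of_nnnorm_deriv_le hrt_diff
    intro x
    rw [← NNReal.coe_le_coe, coe_nnnorm, coe_nnnorm]
    exact (hK x).trans (le_abs_self K)
  obtain ⟨C₀, hC₀⟩ := hsupp.exists_bound_of_continuous hrt_cont
  have hC₀0 : 0 ≤ C₀ := le_trans (norm_nonneg _) (hC₀ 0)
  -- global solution
  obtain ⟨w, hw0, hwd⟩ := FW.exists_global_solution hlip (C := C₀ + 1)
    (by linarith) (fun x => by rw [← Real.norm_eq_abs]; linarith [hC₀ x]) 0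
  have hw_cont : Continuous w := by
    rw [continuous_iff_continuousAt]; exact fun x => (hwd x).continuousAt
  set sq : ℝ := Real.sqrt m with hsq_def
  have hsq0 : 0 < sq := Real.sqrt_pos.2 hm0
  have hsq2 : sq^2 = m := Real.sq_sqrt hm0.le
  -- w never hits ±√m
  have hnot : ∀ e : ℝ, e^2 = m → ∀ x, w x ≠ e := by
    intro e he x hx
    have he0 : e ≠ 0 := by
      intro h
      rw [h] at he
      norm_num at he
      exact hm0.ne' he.symm
    have hrte : rt e = 0 := by
      have : r e = 0 := by
        rw [hr_def]; simp only []
        rw [he, sub_self, zero_mul, zero_div]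
      rw [hrt_def]; simp only [this, mul_zero]
    have huniq : EqOn w (fun _ => e) (Ioo (-(|x|+1)) (|x|+1)) := by
      apply ODE_solution_unique_of_mem_Ioo (v := fun _ u => rt u)
        (s := fun _ => (univ : Set ℝ)) (fun _ _ => hlip.lipschitzOnWith)
        (t₀ := x) ⟨by linarith [neg_abs_le x], by linarith [le_abs_self x]⟩
        (fun t _ => ⟨hwd t, trivial⟩)
        (fun t _ => ⟨by simpa [hrte] using hasDerivAt_const t e, trivial⟩) hx
    have h0m : (0:ℝ) ∈ Ioo (-(|x|+1)) (|x|+1) := by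
      have hx1 : (0:ℝ) < |x| + 1 := by positivity
      exact ⟨by linarith, hx1⟩
    have := huniq h0m
    rw [hw0] at this
    exact he0 this.symm
  -- |w| < √m everywhere
  have habs : ∀ x, |w x| < sq := by
    intro x
    rcases lt_trichotomy |w x| sq with h | h | h
    · exact h
    · exfalso
      rcases (abs_eq hsq0.le).mp h with h1 | h1
      · exact hnot sq hsq2 x h1
      · exact hnot (-sq) (by rw [neg_sq]; exact hsq2) x h1
    · exfalso
      rcases lt_abs.mp h with h1 | h1
      · have hmem : sq ∈ uIcc (w 0) (w x) := by
          rw [hw0]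
          exact Set.mem_uIcc.2 (Or.inl ⟨hsq0.le, h1.le⟩)
        obtain ⟨y, -, hy⟩ := intermediate_value_uIcc hw_cont.continuousOn hmem
        exact hnot sq hsq2 y hy
      · have hmem : -sq ∈ uIcc (w 0) (w x) := by
          rw [hw0]
          refine Set.mem_uIcc.2 (Or.inr ⟨?_, ?_⟩) <;> linarith
        obtain ⟨y, -, hy⟩ := intermediate_value_uIcc hw_cont.continuousOn hmem
        exact hnot (-sq) (by rw [neg_sq]; exact hsq2) y hy
  have hsqlt : ∀ x, (w x)^2 < m := by
    intro x
    nlinarith [habs x, abs_nonneg (w x), sq_abs (w x), hsq2]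
  have hrtw : ∀ x, rt (w x) = r (w x) := fun x => hrt_eq _ (hsqlt x).le
  have hrpos : ∀ u : ℝ, u^2 < m → 0 < r u := by
    intro u hu
    rw [hr_def]
    exact div_pos (mul_pos (by linarith) (Real.sqrt_pos.2 (hAu u))) (by linarith [hBu u])
  have hmono : StrictMono w := by
    apply strictMono_of_deriv_pos
    intro x
    rw [(hwd x).deriv, hrtw x]
    exact hrpos _ (hsqlt x)
  -- oddness
  have hrt_even : ∀ u : ℝ, rt (-u) = rt u := by
    intro u
    simp only [hrt_def, hr_def, neg_sq]
  have hodd : ∀ x, w (-x) = - w x := by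
    have hgd : ∀ x, HasDerivAt (fun y => -w (-y)) (rt (-w (-x))) x := by
      intro x
      have h1 : HasDerivAt (fun y : ℝ => w (-y)) (rt (w (-x)) * (-1)) x :=
        (hwd (-x)).comp x (hasDerivAt_neg x)
      have h2 := h1.fun_neg
      rw [hrt_even]
      refine h2.congr_deriv ?_
      ring
    have key : ∀ x, w x = - w (-x) := by
      intro x
      have hx1 : (0:ℝ) < |x| + 1 := by positivity
      have huniq : EqOn w (fun y => -w (-y)) (Ioo (-(|x|+1)) (|x|+1)) := by
        apply ODE_solution_unique_of_mem_Ioo (v := fun _ u => rt u)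
          (s := fun _ => (univ : Set ℝ)) (fun _ _ => hlip.lipschitzOnWith)
          (t₀ := 0) ⟨by linarith, hx1⟩
          (fun t _ => ⟨hwd t, trivial⟩)
          (fun t _ => ⟨by
            have := hgd t
            simpa [hrt_even] using this, trivial⟩)
        simp [hw0]
      exact huniq ⟨by linarith [neg_abs_le x], by linarith [le_abs_self x]⟩
    intro x
    have := key (-x)
    rw [neg_neg] at this
    linarith [key x, this]
  -- limits at infinity
  have hbdd : BddAbove (range w) := by
    refine ⟨sq, ?_⟩
    rintro _ ⟨x, rfl⟩
    exact (abs_lt.mp (habs x)).2.le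
  have htendL : Tendsto w atTop (nhds (⨆ x, w x)) := tendsto_atTop_ciSup hmono.monotone hbdd
  have hL_le : (⨆ x, w x) ≤ sq := ciSup_le fun x => (abs_lt.mp (habs x)).2.le
  have hL0 : 0 ≤ (⨆ x, w x) := by
    have := le_ciSup hbdd 0
    rw [hw0] at this
    exact this
  have hLeq : (⨆ x, w x) = sq := by
    by_contra hne
    have hLlt : (⨆ x, w x) < sq := lt_of_le_of_ne hL_le hne
    obtain ⟨u₁, hu₁mem, hu₁min⟩ :=
      isCompact_Icc.exists_isMinOn (nonempty_Icc.2 hL0) hr_cont.continuousOn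
    have hu₁sq : u₁^2 < m := by
      rcases hu₁mem with ⟨h1, h2⟩
      nlinarith [hsq2]
    have hε0 : 0 < r u₁ := hrpos _ hu₁sq
    have hwle : ∀ x : ℝ, 0 ≤ x → r u₁ * x ≤ w x := by
      intro x hx
      have hdiff : DifferentiableOn ℝ w (interior (Ici (0:ℝ))) :=
        fun y _ => ((hwd y).differentiableAt).differentiableWithinAt
      have hbound : ∀ y ∈ interior (Ici (0:ℝ)), r u₁ ≤ deriv w y := by
        intro y hy
        rw [interior_Ici, mem_Ioi] at hy
        rw [(hwd y).deriv, hrtw y]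
        apply isMinOn_iff.mp hu₁min
        constructor
        · rw [← hw0]
          exact (hmono.monotone hy.le)
        · exact le_ciSup hbdd y
      have key := (convex_Ici (0:ℝ)).mul_sub_le_image_sub_of_le_deriv
        hw_cont.continuousOn hdiff hbound 0 (mem_Ici.mpr le_rfl) x (mem_Ici.mpr hx) hx
      rw [hw0] at key
      simpa using key
    have hcon := hwle ((sq+1)/(r u₁)) (by positivity)
    rw [mul_div_cancel₀ _ hε0.ne'] at hcon
    have := (abs_lt.mp (habs ((sq+1)/(r u₁)))).2
    linarith
  have htop : Tendsto w atTop (nhds sq) := hLeq ▸ htendL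
  have hbot : Tendsto w atBot (nhds (-sq)) := by
    have h1 : Tendsto (fun x => -w (-x)) atBot (nhds (-sq)) :=
      (htop.comp tendsto_neg_atBot_atTop).neg
    apply h1.congr
    intro x
    rw [hodd x, neg_neg]
  -- the wave profile
  set φ : ℝ → ℝ := fun x => m - (w x)^2 with hφ_def
  have hφd : ∀ x, HasDerivAt φ (-(2 * w x * rt (w x))) x := by
    intro x
    have h1 := ((hwd x).pow 2).const_sub m
    simpa using h1
  -- analyticity
  have hw_an : ∀ x, AnalyticAt ℝ w x := by
    intro x
    have hne : rt (w x) ≠ 0 := by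
      rw [hrtw x]
      exact (hrpos _ (hsqlt x)).ne'
    apply FW.analyticAt_of_ode hwd ?_ hrt_cont.continuousAt hne
    have hopen : rt =ᶠ[nhds (w x)] r := by
      have ho : IsOpen {u : ℝ | u^2 < m} := by
        have : {u : ℝ | u^2 < m} = (fun u : ℝ => u^2) ⁻¹' Iio m := rfl
        rw [this]
        exact (continuous_pow 2).isOpen_preimage _ isOpen_Iio
      filter_upwards [ho.mem_nhds (hsqlt x)] with u hu
      exact hrt_eq u (le_of_lt hu)
    have hrt_anx : AnalyticAt ℝ rt (w x) :=
      ((hr_an (w x)).analyticAt).congr hopen.symm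
    have hinv_an : AnalyticAt ℝ (fun u => (rt u)⁻¹) (w x) := hrt_anx.inv hne
    obtain ⟨H, h1, h2⟩ := FW.exists_analyticAt_antideriv hinv_an
    exact ⟨H, h1, h2⟩
  refine ⟨φ, ?_, ?_, ?_, ?_, ?_, ?_, ?_, ?_, ?_, ?_⟩
  · -- ContDiff ℝ ⊤ φ  (⊤ = ω)
    rw [contDiff_iff_contDiffAt]
    intro x
    exact contDiffAt_const.sub (((hw_an x).contDiffAt).pow 2)
  · intro x
    rw [hφ_def]
    simp only [hodd, neg_sq]
  · intro x
    have := hsqlt x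
    rw [hφ_def]
    simp only []
    linarith
  · rintro ⟨a, ha⟩
    have h1 : φ 0 = φ 1 := by rw [ha 0, ha 1]
    have h2 : w 0 < w 1 := hmono (by norm_num)
    rw [hφ_def] at h1
    simp only [] at h1
    rw [hw0] at h1 h2
    nlinarith
  · rw [(hφd 0).deriv, hw0]
    ring
  · rw [cocompact_eq_atBot_atTop, tendsto_sup]
    constructor
    · have h1 : Tendsto (fun x => m - (w x)^2) atBot (nhds (m - (-sq)^2)) :=
        tendsto_const_nhds.sub ((hbot.pow 2))
      rw [neg_sq, hsq2, sub_self] at h1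
      exact h1
    · have h1 : Tendsto (fun x => m - (w x)^2) atTop (nhds (m - sq^2)) :=
        tendsto_const_nhds.sub ((htop.pow 2))
      rw [hsq2, sub_self] at h1
      exact h1
  · intro x
    have hd : deriv φ x = -(2 * (w x) * r (w x)) := by rw [(hφd x).deriv, hrtw x]
    have hφx : φ x = m - (w x)^2 := rfl
    have hru : r (w x) = (m - (w x)^2) * Real.sqrt (A + (w x)^2) / (4*(B + (w x)^2)) := rfl
    have hq2 : (Real.sqrt (A + (w x)^2))^2 = A + (w x)^2 := Real.sq_sqrt (hAu (w x)).le
    have hBne : (B + (w x)^2) ≠ 0 := (hBu (w x)).ne'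
    rw [hd, hφx, hru]
    have e2 : c - (m - (w x)^2) = B + (w x)^2 := by rw [hB_def]; ring
    rw [e2]
    have e1 : (-(2 * (w x) * ((m - (w x)^2) * Real.sqrt (A + (w x)^2) / (4*(B + (w x)^2)))))^2
        = ((w x) * (m - (w x)^2) / (4*(B + (w x)^2)))^2 * 4 * (Real.sqrt (A + (w x)^2))^2 := by
      ring
    rw [e1, hq2]
    have key : (1/2) * (B + (w x)^2)^2 * (((w x) * (m - (w x)^2) / (4*(B + (w x)^2)))^2 * 4
        * (A + (w x)^2)) = (1/8) * (m - (w x)^2)^2 * ((w x)^2 * (A + (w x)^2)) := by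
      field_simp
      ring
    rw [key]
    have key2 : (w x)^2 * (A + (w x)^2)
        = (m - (w x)^2)^2 - (4*c - 8/3)*(m - (w x)^2) + 4*c*(c-1) := by
      rw [hA_def, hm_def]
      linear_combination (-4/9 : ℝ) * hs2
    rw [key2]
  · intro x
    have h1 := hsqlt x
    have h2 : φ x = m - (w x)^2 := rfl
    constructor
    · rw [h2]; nlinarith
    · have hmc : m < c := by
        have h3 := hB0
        rw [hB_def] at h3
        linarith
      rw [h2]; nlinarith [sq_nonneg (w x)]
  · intro x
    show m - (w x)^2 ≤ m
    nlinarith [sq_nonneg (w x)]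
  · show m - (w 0)^2 = m
    rw [hw0]
    ring

/-- Existence of a smooth solitary wave of the Fornberg–Whitham equation with
speed `c` and zero background: a smooth, even, strictly positive, non-constant
profile with `φ₀′(0) = 0`, `φ₀(x) → 0` as `|x| → ∞`, satisfying the factorized
first-order invariant, staying in `(c − 4/3, c)`, with maximum value
`φ₀max = 2c − 4/3 − (2/3)√(4 − 3c)` attained at `x = 0`, exists if and only if
`c ∈ (1, 4/3)`. -/
theorem stmt5 (c : ℝ) :
    (∃ φ : ℝ → ℝ, ContDiff ℝ (⊤ : ℕ∞) φ ∧
      (∀ x, φ (-x) = φ x) ∧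
      (∀ x, 0 < φ x) ∧
      (¬ ∃ a, ∀ x, φ x = a) ∧
      deriv φ 0 = 0 ∧
      Tendsto φ (cocompact ℝ) (nhds 0) ∧
      (∀ x, (1/2)*(c - φ x)^2*(deriv φ x)^2
        = (1/8)*(φ x)^2*((φ x)^2 - (4*c - 8/3)*(φ x) + 4*c*(c-1))) ∧
      (∀ x, c - 4/3 < φ x ∧ φ x < c) ∧
      (∀ x, φ x ≤ 2*c - 4/3 - (2/3)*Real.sqrt (4 - 3*c)) ∧
      φ 0 = 2*c - 4/3 - (2/3)*Real.sqrt (4 - 3*c))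
    ↔ c ∈ Ioo (1:ℝ) (4/3) := by
  constructor
  · rintro ⟨φ, -, -, hpos, -, -, -, -, hlt, -, hφ0⟩
    have h0 : 0 < φ 0 := hpos 0
    have hc : φ 0 < c := (hlt 0).2
    have hs : 0 ≤ Real.sqrt (4 - 3*c) := Real.sqrt_nonneg _
    have hc2 : c < 4/3 := by
      by_contra hcon
      push_neg at hcon
      have hz : Real.sqrt (4 - 3*c) = 0 := by
        apply Real.sqrt_eq_zero_of_nonpos
        linarith
      rw [hφ0, hz] at hc
      linarith
    have hs2 : (Real.sqrt (4 - 3*c))^2 = 4 - 3*c := Real.sq_sqrt (by linarith)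
    rw [hφ0] at h0
    have h1 : Real.sqrt (4 - 3*c) < 3*c - 2 := by linarith
    have hc1 : 1 < c := by nlinarith [h1, hs, hs2]
    exact ⟨hc1, hc2⟩
  · rintro ⟨hc1, hc2⟩
    exact FW.construction c hc1 hc2
end

section
/- Let G : ℝ → ℝ be G(x) = exp(−|x|)/2 and let k ∈ ℝ. Suppose u : ℝ × ℝ → ℝ has continuous first-order partial derivatives, u(·,t) and ∂ₓu(·,t) are integrable on ℝ for every t, and u satisfies ∂ₜu(x,t) + u(x,t)∂ₓu(x,t) + (G * ∂ₓu(·,t))(x) = 0 for all (x,t). Then the function v defined by v(x,t) = u(x − kt, t) + k has continuous first-order partial derivatives, v(·,t) − k and ∂ₓv(·,t) are integrable, and v satisfies ∂ₜv(x,t) + v(x,t)∂ₓv(x,t) + (G * ∂ₓv(·,t))(x) = 0 for all (x,t). -/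
open MeasureTheory Real

/-!
`v(x,t) = u(x − kt, t) + k` is `u` seen from a frame moving with speed `k`, shifted by `k`.
By the chain rule `∂ₓv = ∂ₓu` and `∂ₜv = ∂ₜu − k ∂ₓu` at `(x − kt, t)`, so the extra term
`k ∂ₓu` produced by `v ∂ₓv` cancels the extra `−k ∂ₓu` in `∂ₜv`, while the nonlocal term is
unchanged because convolution commutes with translations.
-/

section PartialDerivatives

variable {E : Type*} [NormedAddCommGroup E] [NormedSpace ℝ E] {u : ℝ × ℝ → E}

theorem DifferentiableAt.hasDerivAt_partial_fst {x t : ℝ} (hu : DifferentiableAt ℝ u (x, t)) :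
    HasDerivAt (fun y => u (y, t)) (fderiv ℝ u (x, t) (1, 0)) x :=
  hu.hasFDerivAt.comp_hasDerivAt x ((hasDerivAt_id x).prodMk (hasDerivAt_const x t))

theorem DifferentiableAt.hasDerivAt_partial_snd {x t : ℝ} (hu : DifferentiableAt ℝ u (x, t)) :
    HasDerivAt (fun s => u (x, s)) (fderiv ℝ u (x, t) (0, 1)) t :=
  hu.hasFDerivAt.comp_hasDerivAt t ((hasDerivAt_const t x).prodMk (hasDerivAt_id t))

theorem DifferentiableAt.hasDerivAt_comp_moving_frame {x t k : ℝ}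
    (hu : DifferentiableAt ℝ u (x - k * t, t)) :
    HasDerivAt (fun s => u (x - k * s, s))
      (-k • deriv (fun y => u (y, t)) (x - k * t) + deriv (fun s => u (x - k * t, s)) t) t := by
  have hline : HasDerivAt (fun s : ℝ => (x - k * s, s)) ((-k, 1) : ℝ × ℝ) t := by
    simpa using ((hasDerivAt_const t x).sub ((hasDerivAt_id t).const_mul k)).prodMk
      (hasDerivAt_id t)
  have hdir : ((-k, 1) : ℝ × ℝ) = (-k) • ((1, 0) : ℝ × ℝ) + (0, 1) := by simp
  have h := HasFDerivAt.comp_hasDerivAt (f := fun s : ℝ => (x - k * s, s)) t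
    hu.hasFDerivAt hline
  rwa [hdir, map_add, map_smul, ← hu.hasDerivAt_partial_fst.deriv,
    ← hu.hasDerivAt_partial_snd.deriv] at h

end PartialDerivatives

theorem deriv_comp_sub_const_add_const {𝕜 F : Type*} [NontriviallyNormedField 𝕜]
    [NormedAddCommGroup F] [NormedSpace 𝕜 F] (f : 𝕜 → F) (c : 𝕜) (k : F) (x : 𝕜) :
    deriv (fun y => f (y - c) + k) x = deriv f (x - c) := by
  rw [deriv_add_const]
  exact deriv_comp_sub_const f c x

theorem integral_mul_comp_sub_right (K g : ℝ → ℝ) (x c : ℝ) :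
    ∫ s, K (x - s) * g (s - c) = ∫ s, K (x - c - s) * g s := by
  rw [← integral_sub_right_eq_self (fun s => K (x - c - s) * g s) c]
  simp only [sub_sub_sub_cancel_right]

/-- Galilean-type symmetry of the nonlocal Fornberg–Whitham equation
`u_t + u u_x + G * u_x = 0` with kernel `G(x) = exp(−|x|)/2`: if `u` is a `C¹`
solution with `u(·,t)` and `∂ₓu(·,t)` integrable, then
`v(x,t) = u(x − kt, t) + k` is again a `C¹` solution with `v(·,t) − k` and
`∂ₓv(·,t)` integrable. -/
theorem stmt6 (k : ℝ) (u : ℝ × ℝ → ℝ)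
    (hu : ContDiff ℝ 1 u)
    (hint : ∀ t, Integrable (fun x => u (x, t)))
    (hint' : ∀ t, Integrable (fun x => deriv (fun y => u (y, t)) x))
    (heq : ∀ x t, deriv (fun s => u (x, s)) t
        + u (x, t) * deriv (fun y => u (y, t)) x
        + (∫ s, (exp (-|x - s|) / 2) * deriv (fun y => u (y, t)) s) = 0) :
    ContDiff ℝ 1 (fun p : ℝ × ℝ => u (p.1 - k * p.2, p.2) + k) ∧
    (∀ t, Integrable (fun x => (u (x - k * t, t) + k) - k)) ∧
    (∀ t, Integrable (fun x => deriv (fun y => u (y - k * t, t) + k) x)) ∧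
    (∀ x t, deriv (fun s => u (x - k * s, s) + k) t
        + (u (x - k * t, t) + k) * deriv (fun y => u (y - k * t, t) + k) x
        + (∫ s, (exp (-|x - s|) / 2) * deriv (fun y => u (y - k * t, t) + k) s) = 0) := by
  have hux (t : ℝ) := deriv_comp_sub_const_add_const (fun y => u (y, t)) (k * t) k
  refine ⟨?_, fun t => ?_, fun t => ?_, fun x t => ?_⟩
  · exact (hu.comp ((contDiff_fst.sub (contDiff_const.mul contDiff_snd)).prodMk
      contDiff_snd)).add contDiff_const
  · simpa using (hint t).comp_sub_right (k * t)
  · simpa only [hux] using (hint' t).comp_sub_right (k * t)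
  · have hut : deriv (fun s => u (x - k * s, s) + k) t
        = -k * deriv (fun y => u (y, t)) (x - k * t) + deriv (fun s => u (x - k * t, s)) t :=
      ((hu.differentiable one_ne_zero _).hasDerivAt_comp_moving_frame.add_const k).deriv
    simp only [hux, hut, integral_mul_comp_sub_right (fun z => exp (-|z|) / 2)]
    linear_combination heq (x - k * t) t
end

section
/- Let G : ℝ → ℝ be G(x) = exp(−|x|)/2, fix c ∈ ℝ, and let φ : ℝ → ℝ be twice continuously differentiable with φ, φ′, φ″ integrable on ℝ and φ(x), φ′(x), φ″(x) → 0 as |x| → ∞. Then the nonlocal equation cφ(x) − φ(x)²/2 = (G * φ)(x) for all x ∈ ℝ holds if and only if the local equation cφ(x) − φ(x)²/2 − cφ″(x) + φ(x)φ″(x) + (φ′(x))² = φ(x) for all x ∈ ℝ holds. -/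
open MeasureTheory Real Filter Set

/-!
Write `w = G * φ`. Splitting the integral at `x` gives `w = (L + U) / 2` with the one-sided
transforms `L x = ∫_{s ≤ x} e^{s-x} φ s` and `U x = ∫_{s > x} e^{x-s} φ s`, which satisfy
`L' = φ - L` and `U' = U - φ`. Hence `w'' = w - φ`, and `w`, `w'` are bounded by `‖φ‖₁`.
The local equation says exactly that `u = cφ - φ²/2` satisfies `u'' = u - φ`. So the nonlocal
equation gives the local one by differentiating twice; conversely `u - w` is a solution of
`v'' = v` which is bounded together with its derivative (`u, u' → 0` at infinity), hence zero:
both `v' + v` and `v(-·)` then solve `g' = g`, whose only bounded solution is `0` since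
`e^{-x} g x` is constant.
-/

theorem exists_norm_le_of_tendsto_cocompact {X E : Type*} [TopologicalSpace X]
    [SeminormedAddCommGroup E] {f : X → E} (hf : Continuous f)
    (h : Tendsto f (cocompact X) (nhds 0)) : ∃ C, ∀ x, ‖f x‖ ≤ C := by
  obtain ⟨C, hC⟩ := isBounded_iff_forall_norm_le.1
    (ZeroAtInftyContinuousMap.isBounded_range ⟨⟨f, hf⟩, h⟩)
  exact ⟨C, fun x => hC _ (mem_range_self x)⟩

theorem exists_norm_sub_le {α E : Type*} [SeminormedAddCommGroup E] {f g : α → E}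
    (hf : ∃ C, ∀ x, ‖f x‖ ≤ C) (hg : ∃ C, ∀ x, ‖g x‖ ≤ C) : ∃ C, ∀ x, ‖f x - g x‖ ≤ C := by
  obtain ⟨C, hC⟩ := hf
  obtain ⟨D, hD⟩ := hg
  exact ⟨C + D, fun x => (norm_sub_le _ _).trans (add_le_add (hC x) (hD x))⟩

section BoundedSolutions

variable {E : Type*} [NormedAddCommGroup E] [NormedSpace ℝ E]

theorem eq_zero_of_hasDerivAt_self {g : ℝ → E} (hg : ∀ x, HasDerivAt g (g x) x)
    (hbdd : ∃ C, ∀ x, ‖g x‖ ≤ C) : g = 0 := by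
  obtain ⟨C, hC⟩ := hbdd
  have hconst : ∀ x y, exp (-x) • g x = exp (-y) • g y := by
    refine is_const_of_deriv_eq_zero (fun x => ?_) (fun x => ?_)
    · exact ((hasDerivAt_neg x).exp.smul (hg x)).differentiableAt
    · refine ((hasDerivAt_neg x).exp.smul (hg x)).deriv.trans ?_
      simp
  funext y
  have hdecay : Tendsto (fun x => exp (y - x) * C) atTop (nhds 0) := by
    have hlin : Tendsto (fun x => y + -x) atTop atBot :=
      tendsto_atBot_add_const_left _ y tendsto_neg_atTop_atBot
    simpa [← sub_eq_add_neg] using (tendsto_exp_atBot.comp hlin).mul_const C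
  refine norm_le_zero_iff.1 (ge_of_tendsto' hdecay fun x => ?_)
  have hgy : g y = exp (y - x) • g x := by
    rw [sub_eq_add_neg, exp_add, mul_smul, hconst x y, smul_smul, ← exp_add]
    simp
  rw [hgy, norm_smul, norm_of_nonneg (exp_pos _).le]
  exact mul_le_mul_of_nonneg_left (hC x) (exp_pos _).le

theorem eq_zero_of_second_deriv_eq_self {v v₁ : ℝ → E} (hv : ∀ x, HasDerivAt v (v₁ x) x)
    (hv₁ : ∀ x, HasDerivAt v₁ (v x) x) (hbdd : ∃ C, ∀ x, ‖v x‖ ≤ C)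
    (hbdd₁ : ∃ C, ∀ x, ‖v₁ x‖ ≤ C) : v = 0 := by
  obtain ⟨C, hC⟩ := hbdd
  obtain ⟨C₁, hC₁⟩ := hbdd₁
  have hsum : v₁ + v = 0 := eq_zero_of_hasDerivAt_self
    (fun x => by simpa [add_comm] using (hv₁ x).add (hv x))
    ⟨C₁ + C, fun x => (norm_add_le _ _).trans (add_le_add (hC₁ x) (hC x))⟩
  have hv' : ∀ x, HasDerivAt v (-v x) x := fun x => by
    simpa [eq_neg_of_add_eq_zero_left (congrFun hsum x)] using hv x
  have hreflect : (fun x => v (-x)) = 0 := eq_zero_of_hasDerivAt_self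
    (fun x => by simpa [Function.comp_def] using (hv' (-x)).scomp x (hasDerivAt_neg x))
    ⟨C, fun x => hC (-x)⟩
  funext x
  simpa using congrFun hreflect (-x)

theorem forall_eq_iff_second_deriv_eq {u u₁ u₂ w w₁ f : ℝ → E}
    (hu : ∀ x, HasDerivAt u (u₁ x) x) (hu₁ : ∀ x, HasDerivAt u₁ (u₂ x) x)
    (hw : ∀ x, HasDerivAt w (w₁ x) x) (hw₁ : ∀ x, HasDerivAt w₁ (w x - f x) x)
    (hu_bdd : ∃ C, ∀ x, ‖u x‖ ≤ C) (hu₁_bdd : ∃ C, ∀ x, ‖u₁ x‖ ≤ C)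
    (hw_bdd : ∃ C, ∀ x, ‖w x‖ ≤ C) (hw₁_bdd : ∃ C, ∀ x, ‖w₁ x‖ ≤ C) :
    (∀ x, u x = w x) ↔ ∀ x, u₂ x = u x - f x := by
  constructor
  · intro heq x
    obtain rfl : u = w := funext heq
    obtain rfl : u₁ = w₁ := funext fun y => (hu y).unique (hw y)
    exact (hu₁ x).unique (hw₁ x)
  · intro hode x
    have hv₁ : ∀ x, HasDerivAt (u₁ - w₁) (u x - w x) x := fun x => by
      simpa [hode x] using (hu₁ x).sub (hw₁ x)
    exact sub_eq_zero.1 (congrFun (eq_zero_of_second_deriv_eq_self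
      (fun x => (hu x).sub (hw x)) hv₁ (exists_norm_sub_le hu_bdd hw_bdd)
      (exists_norm_sub_le hu₁_bdd hw₁_bdd)) x)

end BoundedSolutions

theorem hasDerivAt_integral_Iic {E : Type*} [NormedAddCommGroup E] [NormedSpace ℝ E]
    [CompleteSpace E] {f : ℝ → E} (hf : Continuous f) (hint : ∀ a, IntegrableOn f (Iic a))
    (x : ℝ) : HasDerivAt (fun y => ∫ t in Iic y, f t) (f x) x := by
  have hsplit : (fun y => ∫ t in Iic y, f t) = fun y => (∫ t in Iic 0, f t) + ∫ t in 0..y, f t :=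
    funext fun y => by rw [← intervalIntegral.integral_Iic_sub_Iic (hint 0) (hint y)]; abel
  rw [hsplit]
  exact (intervalIntegral.integral_hasDerivAt_right (hf.intervalIntegrable 0 x)
    (hf.stronglyMeasurableAtFilter _ _) hf.continuousAt).const_add _

section ExpKernel

noncomputable def lowerExpConv (φ : ℝ → ℝ) (x : ℝ) : ℝ := ∫ s in Iic x, exp (-(x - s)) * φ s

noncomputable def upperExpConv (φ : ℝ → ℝ) (x : ℝ) : ℝ := ∫ s in Ioi x, exp (-(s - x)) * φ s

noncomputable def expKernelConv (φ : ℝ → ℝ) (x : ℝ) : ℝ := ∫ s, exp (-|x - s|) / 2 * φ s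

variable {φ : ℝ → ℝ}

theorem MeasureTheory.Integrable.integrableOn_exp_mul_Iic (hφ : Integrable φ) (a : ℝ) :
    IntegrableOn (fun s => exp s * φ s) (Iic a) := by
  refine hφ.restrict.bdd_mul (c := exp a) continuous_exp.aestronglyMeasurable ?_
  filter_upwards [self_mem_ae_restrict measurableSet_Iic] with s hs
  simpa using exp_le_exp.2 hs

theorem lowerExpConv_eq (x : ℝ) :
    lowerExpConv φ x = exp (-x) * ∫ s in Iic x, exp s * φ s := by
  rw [lowerExpConv, ← integral_const_mul]
  congr 1 with s
  rw [neg_sub, sub_eq_add_neg, exp_add]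
  ring

theorem upperExpConv_eq_lowerExpConv_comp_neg (x : ℝ) :
    upperExpConv φ x = lowerExpConv (fun s => φ (-s)) (-x) := by
  rw [upperExpConv, lowerExpConv, ← integral_comp_neg_Ioi]
  simp_rw [neg_neg]
  congr! 4
  ring

theorem hasDerivAt_lowerExpConv (hc : Continuous φ) (hφ : Integrable φ) (x : ℝ) :
    HasDerivAt (lowerExpConv φ) (φ x - lowerExpConv φ x) x := by
  have hA := hasDerivAt_integral_Iic (continuous_exp.mul hc) hφ.integrableOn_exp_mul_Iic x
  rw [lowerExpConv_eq x, funext lowerExpConv_eq]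
  refine ((hasDerivAt_neg x).exp.mul hA).congr_deriv ?_
  simp only [Pi.mul_apply]
  rw [← mul_assoc, ← exp_add, neg_add_cancel, exp_zero]
  ring

theorem hasDerivAt_upperExpConv (hc : Continuous φ) (hφ : Integrable φ) (x : ℝ) :
    HasDerivAt (upperExpConv φ) (upperExpConv φ x - φ x) x := by
  have h := hasDerivAt_lowerExpConv (φ := fun s => φ (-s)) (by fun_prop) hφ.comp_neg (-x)
  rw [upperExpConv_eq_lowerExpConv_comp_neg x, funext upperExpConv_eq_lowerExpConv_comp_neg]
  exact (h.comp x (hasDerivAt_neg x)).congr_deriv (by simp)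

theorem norm_lowerExpConv_le (hφ : Integrable φ) (x : ℝ) :
    ‖lowerExpConv φ x‖ ≤ ∫ s, ‖φ s‖ := by
  refine (norm_integral_le_of_norm_le hφ.norm.restrict ?_).trans
    (setIntegral_le_integral hφ.norm (.of_forall fun _ => norm_nonneg _))
  filter_upwards [self_mem_ae_restrict measurableSet_Iic] with s hs
  rw [norm_mul, norm_of_nonneg (exp_pos _).le]
  exact mul_le_of_le_one_left (norm_nonneg _) (exp_le_one_iff.2 (by simpa using hs))

theorem norm_upperExpConv_le (hφ : Integrable φ) (x : ℝ) :
    ‖upperExpConv φ x‖ ≤ ∫ s, ‖φ s‖ := by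
  rw [upperExpConv_eq_lowerExpConv_comp_neg, ← integral_neg_eq_self]
  exact norm_lowerExpConv_le hφ.comp_neg (-x)

theorem norm_exp_neg_abs_div_two_le (y : ℝ) : ‖exp (-|y|) / 2‖ ≤ 1 := by
  rw [norm_div, norm_of_nonneg (exp_pos _).le, Real.norm_two]
  linarith [exp_le_one_iff.2 (neg_nonpos.2 (abs_nonneg y))]

theorem expKernelConv_eq (hφ : Integrable φ) (x : ℝ) :
    expKernelConv φ x = (lowerExpConv φ x + upperExpConv φ x) / 2 := by
  have hint : Integrable fun s => exp (-|x - s|) / 2 * φ s :=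
    hφ.bdd_mul (by fun_prop) (.of_forall fun s => norm_exp_neg_abs_div_two_le (x - s))
  rw [expKernelConv, ← intervalIntegral.integral_Iic_add_Ioi hint.integrableOn hint.integrableOn,
    add_div, lowerExpConv, upperExpConv, ← integral_div, ← integral_div]
  congr 1
  · refine setIntegral_congr_fun measurableSet_Iic fun s hs => ?_
    rw [abs_of_nonneg (sub_nonneg.2 hs)]
    ring
  · refine setIntegral_congr_fun measurableSet_Ioi fun s hs => ?_
    rw [abs_of_neg (sub_neg.2 hs), neg_sub]
    ring

theorem norm_expKernelConv_le (hφ : Integrable φ) (x : ℝ) :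
    ‖expKernelConv φ x‖ ≤ ∫ s, ‖φ s‖ :=
  norm_integral_le_of_norm_le hφ.norm (.of_forall fun s => by
    rw [norm_mul]
    exact mul_le_of_le_one_left (norm_nonneg _) (norm_exp_neg_abs_div_two_le (x - s)))

theorem norm_upperExpConv_sub_lowerExpConv_le (hφ : Integrable φ) (x : ℝ) :
    ‖(upperExpConv φ x - lowerExpConv φ x) / 2‖ ≤ ∫ s, ‖φ s‖ := by
  rw [norm_div, Real.norm_two]
  linarith [norm_sub_le (upperExpConv φ x) (lowerExpConv φ x), norm_lowerExpConv_le hφ x,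
    norm_upperExpConv_le hφ x]

theorem hasDerivAt_expKernelConv (hc : Continuous φ) (hφ : Integrable φ) (x : ℝ) :
    HasDerivAt (expKernelConv φ) ((upperExpConv φ x - lowerExpConv φ x) / 2) x := by
  rw [funext (expKernelConv_eq hφ)]
  exact (((hasDerivAt_lowerExpConv hc hφ x).add (hasDerivAt_upperExpConv hc hφ x)).div_const 2)
    |>.congr_deriv (by ring)

theorem hasDerivAt_upperExpConv_sub_lowerExpConv (hc : Continuous φ) (hφ : Integrable φ)
    (x : ℝ) : HasDerivAt (fun y => (upperExpConv φ y - lowerExpConv φ y) / 2)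
      (expKernelConv φ x - φ x) x := by
  rw [expKernelConv_eq hφ]
  exact (((hasDerivAt_upperExpConv hc hφ x).sub (hasDerivAt_lowerExpConv hc hφ x)).div_const 2)
    |>.congr_deriv (by ring)

end ExpKernel

theorem stmt9_general (c : ℝ) (φ : ℝ → ℝ) (hφ : ContDiff ℝ 2 φ)
    (h1 : Integrable φ)
    (h4 : Tendsto φ (cocompact ℝ) (nhds 0))
    (h5 : Tendsto (deriv φ) (cocompact ℝ) (nhds 0)) :
    (∀ x, c * φ x - (φ x)^2/2 = ∫ s, (exp (-|x - s|)/2) * φ s) ↔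
    (∀ x, c * φ x - (φ x)^2/2 - c * deriv (deriv φ) x
        + φ x * deriv (deriv φ) x + (deriv φ x)^2 = φ x) := by
  have hφ' (x : ℝ) : HasDerivAt φ (deriv φ x) x := (hφ.differentiable two_ne_zero x).hasDerivAt
  have hφ'' (x : ℝ) : HasDerivAt (deriv φ) (deriv (deriv φ) x) x :=
    (hφ.differentiable_deriv_two x).hasDerivAt
  have hu (x : ℝ) : HasDerivAt (fun y => c * φ y - φ y ^ 2 / 2)
      (c * deriv φ x - φ x * deriv φ x) x :=
    (((hφ' x).const_mul c).sub (((hφ' x).pow 2).div_const 2)).congr_deriv (by ring)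
  have hu₁ (x : ℝ) : HasDerivAt (fun y => c * deriv φ y - φ y * deriv φ y)
      (c * deriv (deriv φ) x - (deriv φ x * deriv φ x + φ x * deriv (deriv φ) x)) x :=
    ((hφ'' x).const_mul c).sub ((hφ' x).mul (hφ'' x))
  have hφc := hφ.continuous
  have hφ'c := hφ.continuous_deriv one_le_two
  have hu_bdd := exists_norm_le_of_tendsto_cocompact (f := fun y => c * φ y - φ y ^ 2 / 2)
    (by fun_prop) (by simpa only [mul_zero, zero_pow two_ne_zero, zero_div, sub_zero] using
      (h4.const_mul c).sub ((h4.pow 2).div_const 2))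
  have hu₁_bdd := exists_norm_le_of_tendsto_cocompact
    (f := fun y => c * deriv φ y - φ y * deriv φ y) (by fun_prop)
    (by simpa only [mul_zero, sub_zero] using (h5.const_mul c).sub (h4.mul h5))
  refine (forall_eq_iff_second_deriv_eq (w := expKernelConv φ) hu hu₁
    (hasDerivAt_expKernelConv hφc h1) (hasDerivAt_upperExpConv_sub_lowerExpConv hφc h1)
    hu_bdd hu₁_bdd ⟨_, norm_expKernelConv_le h1⟩
    ⟨_, norm_upperExpConv_sub_lowerExpConv_le h1⟩).trans (forall_congr' fun x => ?_)
  constructor <;> intro h <;> linarith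

/-- Equivalence of the nonlocal traveling-wave equation `cφ − φ²/2 = G * φ`
(with `G(x) = exp(−|x|)/2`) and the local equation
`cφ − φ²/2 − cφ″ + φφ″ + φ′² = φ`, for a `C²` profile with `φ, φ′, φ″`
integrable and decaying at infinity. -/
theorem stmt9 (c : ℝ) (φ : ℝ → ℝ) (hφ : ContDiff ℝ 2 φ)
    (h1 : Integrable φ) (h2 : Integrable (deriv φ))
    (h3 : Integrable (deriv (deriv φ)))
    (h4 : Tendsto φ (cocompact ℝ) (nhds 0))
    (h5 : Tendsto (deriv φ) (cocompact ℝ) (nhds 0))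
    (h6 : Tendsto (deriv (deriv φ)) (cocompact ℝ) (nhds 0)) :
    (∀ x, c * φ x - (φ x)^2/2 = ∫ s, (exp (-|x - s|)/2) * φ s) ↔
    (∀ x, c * φ x - (φ x)^2/2 - c * deriv (deriv φ) x
        + φ x * deriv (deriv φ) x + (deriv φ x)^2 = φ x) :=
  stmt9_general c φ hφ h1 h4 h5
end

section
/- Let φ : ℝ → ℝ be continuous, integrable, even, strictly positive, and strictly decreasing on [0, ∞). Then for every x > 0, ∫_x^∞ e^{x−s} φ(s) ds < ∫_{−∞}^x e^{−(x−s)} φ(s) ds. Consequently, the function p₀(x) := (1/2)(∫_x^∞ e^{x−s} φ(s) ds − ∫_{−∞}^x e^{−(x−s)} φ(s) ds) is strictly negative for x > 0, strictly positive for x < 0 (by oddness), and vanishes exactly at x = 0. -/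
open MeasureTheory Real Set

private lemma refl_integral (f : ℝ → ℝ) (a : ℝ) :
    (∫ s in Ioi a, f s) = ∫ t in Iio a, f (2 * a - t) := by
  have hemb : MeasurableEmbedding (fun t : ℝ => 2 * a - t) := by
    have : (fun t : ℝ => 2 * a - t) = (fun t : ℝ => 2 * a + t) ∘ (fun t : ℝ => -t) := by
      funext t; simp [sub_eq_add_neg]
    rw [this]
    exact ((Homeomorph.addLeft (2 * a)).measurableEmbedding).comp
      (Homeomorph.neg ℝ).measurableEmbedding
  have hmp : MeasurePreserving (fun t : ℝ => 2 * a - t) volume volume :=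
    Measure.measurePreserving_sub_left volume (2 * a)
  have := hmp.setIntegral_preimage_emb hemb f (Ioi a)
  have hpre : (fun t : ℝ => 2 * a - t) ⁻¹' (Ioi a) = Iio a := by
    ext t; simp only [mem_preimage, mem_Ioi, mem_Iio]; constructor <;> intro h <;> linarith
  rw [hpre] at this
  exact this.symm

/-- For `φ` continuous, integrable, even, strictly positive and strictly
decreasing on `[0, ∞)`: for every `x > 0` the right tail integral
`∫_x^∞ e^{x−s} φ(s) ds` is strictly smaller than `∫_{−∞}^x e^{−(x−s)} φ(s) ds`;
consequently `p₀(x) = (1/2)(∫_x^∞ e^{x−s} φ − ∫_{−∞}^x e^{−(x−s)} φ)` is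
negative for `x > 0`, positive for `x < 0`, and vanishes exactly at `x = 0`. -/
theorem stmt15 (φ : ℝ → ℝ) (hc : Continuous φ) (hi : Integrable φ)
    (he : ∀ x, φ (-x) = φ x) (hp : ∀ x, 0 < φ x)
    (hd : StrictAntiOn φ (Ici 0))
    (p₀ : ℝ → ℝ)
    (hp₀ : ∀ x, p₀ x = (1/2) * ((∫ s in Ioi x, exp (x - s) * φ s)
        - ∫ s in Iio x, exp (-(x - s)) * φ s)) :
    (∀ x > 0, (∫ s in Ioi x, exp (x - s) * φ s)
        < ∫ s in Iio x, exp (-(x - s)) * φ s) ∧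
    (∀ x > 0, p₀ x < 0) ∧
    (∀ x < 0, 0 < p₀ x) ∧
    (∀ x, p₀ x = 0 ↔ x = 0) := by
  -- the key strict inequality
  have key : ∀ x > 0, (∫ s in Ioi x, exp (x - s) * φ s)
      < ∫ s in Iio x, exp (-(x - s)) * φ s := by
    intro x hx
    -- rewrite the left integral by reflection about x
    have hrefl : (∫ s in Ioi x, exp (x - s) * φ s)
        = ∫ t in Iio x, exp (t - x) * φ (2 * x - t) := by
      rw [refl_integral (fun s => exp (x - s) * φ s) x]
      apply setIntegral_congr_fun measurableSet_Iio
      intro t _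
      have : x - (2 * x - t) = t - x := by ring
      simp [this]
    rw [hrefl]
    -- integrability of both integrands
    have hmeas1 : AEStronglyMeasurable (fun t : ℝ => exp (t - x) * φ (2 * x - t))
        (volume.restrict (Iio x)) :=
      (((continuous_id.sub continuous_const).rexp).mul
        (hc.comp (continuous_const.sub continuous_id))).aestronglyMeasurable
    have hmeas2 : AEStronglyMeasurable (fun t : ℝ => exp (-(x - t)) * φ t)
        (volume.restrict (Iio x)) :=
      (((continuous_const.sub continuous_id).neg.rexp).mul hc).aestronglyMeasurable
    have hint1 : IntegrableOn (fun t : ℝ => exp (t - x) * φ (2 * x - t)) (Iio x) := by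
      refine Integrable.mono ((hi.comp_sub_left (2 * x)).integrableOn) hmeas1 ?_
      filter_upwards [ae_restrict_mem measurableSet_Iio] with t ht
      rw [norm_mul, Real.norm_eq_abs, Real.norm_eq_abs, abs_exp, abs_of_pos (hp _)]
      have h1 : exp (t - x) ≤ 1 := exp_le_one_iff.2 (by simp only [mem_Iio] at ht; linarith)
      nlinarith [hp (2 * x - t), exp_pos (t - x)]
    have hint2 : IntegrableOn (fun t : ℝ => exp (-(x - t)) * φ t) (Iio x) := by
      refine Integrable.mono hi.integrableOn hmeas2 ?_
      filter_upwards [ae_restrict_mem measurableSet_Iio] with t ht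
      rw [norm_mul, Real.norm_eq_abs, Real.norm_eq_abs, abs_exp, abs_of_pos (hp _)]
      have h1 : exp (-(x - t)) ≤ 1 := exp_le_one_iff.2 (by simp only [mem_Iio] at ht; linarith)
      nlinarith [hp t, exp_pos (-(x - t))]
    -- pointwise strict inequality on Iio x
    have hlt : ∀ t ∈ Iio x, exp (t - x) * φ (2 * x - t) < exp (-(x - t)) * φ t := by
      intro t ht
      simp only [mem_Iio] at ht
      have hexp : -(x - t) = t - x := by ring
      rw [hexp]
      have habs : φ t = φ |t| := by
        rcases le_or_gt 0 t with h | h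
        · rw [abs_of_nonneg h]
        · rw [abs_of_neg h, he]
      have h2x : (0:ℝ) ≤ 2 * x - t := by
        rcases le_or_gt 0 t with h | h <;> linarith
      have hlt' : |t| < 2 * x - t := by
        rcases le_or_gt 0 t with h | h
        · rw [abs_of_nonneg h]; linarith
        · rw [abs_of_neg h]; linarith
      have : φ (2 * x - t) < φ |t| := hd (mem_Ici.2 (abs_nonneg t)) (mem_Ici.2 h2x) hlt'
      rw [← habs] at this
      exact mul_lt_mul_of_pos_left this (exp_pos _)
    -- strict inequality of integrals
    have hdiff : 0 < ∫ t in Iio x,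
        (exp (-(x - t)) * φ t - exp (t - x) * φ (2 * x - t)) := by
      rw [setIntegral_pos_iff_support_of_nonneg_ae]
      · have hsub : Iio x ⊆ Function.support
            (fun t => exp (-(x - t)) * φ t - exp (t - x) * φ (2 * x - t)) := by
          intro t ht
          exact ne_of_gt (sub_pos.2 (hlt t ht))
        calc (0:ENNReal) < volume (Iio x) := by simp
          _ ≤ volume (Function.support
              (fun t => exp (-(x - t)) * φ t - exp (t - x) * φ (2 * x - t)) ∩ Iio x) := by
            apply measure_mono; intro t ht; exact ⟨hsub ht, ht⟩
      · filter_upwards [ae_restrict_mem measurableSet_Iio] with t ht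
        exact le_of_lt (sub_pos.2 (hlt t ht))
      · exact hint2.sub hint1
    rw [integral_sub hint2 hint1] at hdiff
    linarith
  -- oddness of p₀
  have hodd : ∀ x, p₀ (-x) = -p₀ x := by
    intro x
    have hA : (∫ s in Ioi (-x), exp (-x - s) * φ s)
        = ∫ s in Iio x, exp (-(x - s)) * φ s := by
      have := integral_comp_neg_Iic x (fun s : ℝ => exp (-x - s) * φ s)
      rw [integral_Iic_eq_integral_Iio] at this
      rw [← this]
      apply setIntegral_congr_fun measurableSet_Iio
      intro t _
      show exp (-x - -t) * φ (-t) = exp (-(x - t)) * φ t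
      rw [he]
      congr 1
      ring
    have hB : (∫ s in Iio (-x), exp (-(-x - s)) * φ s)
        = ∫ s in Ioi x, exp (x - s) * φ s := by
      have := integral_comp_neg_Iic (-x) (fun s : ℝ => exp (x - s) * φ s)
      rw [integral_Iic_eq_integral_Iio, neg_neg] at this
      rw [← this]
      apply setIntegral_congr_fun measurableSet_Iio
      intro t _
      show exp (-(-x - t)) * φ t = exp (x - -t) * φ (-t)
      rw [he]
      congr 1
      ring
    rw [hp₀, hp₀, hA, hB]
    ring
  have hzero : p₀ 0 = 0 := by
    have := hodd 0
    rw [neg_zero] at this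
    linarith
  refine ⟨key, ?_, ?_, ?_⟩
  · intro x hx
    rw [hp₀]
    have := key x hx
    linarith
  · intro x hx
    have h2 : p₀ (-x) < 0 := by
      rw [hp₀]
      have := key (-x) (by linarith)
      linarith
    have h3 := hodd (-x)
    rw [neg_neg] at h3
    linarith
  · intro x
    constructor
    · intro h
      by_contra hx
      rcases lt_or_gt_of_ne hx with h1 | h1
      · have h2 : p₀ (-x) < 0 := by
          rw [hp₀]; have := key (-x) (by linarith); linarith
        have := hodd x
        linarith
      · have h2 : p₀ x < 0 := by
          rw [hp₀]; have := key x h1; linarith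
        linarith
    · intro h; rw [h]; exact hzero
end

section
/- Fix c ∈ (1, 4/3) and set φ₋ = 2c − 4/3 − (2/3)√(4 − 3c) and φ₊ = 2c − 4/3 + (2/3)√(4 − 3c). Then 4 ∫_0^{φ₋} φ(c − φ)/√((φ − φ₋)(φ − φ₊)) dφ = 16(c−1)√(c(c−1)) + (8/3)(c−1)(4−3c)·ln((3c − 2 + 3√(c(c−1)))/√(4 − 3c)). -/
/-!
With `Q(φ) = (φ - a)(φ - b)`, `m = (a + b)/2` and `a < b`, the integrand `φ (c - φ) / √Q` has the
elementary primitive `(α - φ/2) √Q + K log (m - φ + √Q)`: the derivatives of `√Q` and of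
`log (m - φ + √Q)` are `(φ - m)/√Q` and `-1/√Q`, so `α` and `K` are found by matching a quadratic
polynomial. The primitive is continuous up to the branch point `a`, where the integrand has an
integrable `(a - φ)^(-1/2)` singularity, so the fundamental theorem of calculus evaluates the
integral over `[0, a]`. For the roots `φ∓` one has `m = 2c - 4/3`, `φ₋ φ₊ = 4c(c - 1)` and
`(φ₊ - φ₋)/2 = (2/3)√(4 - 3c)`, which turns the two boundary values into the closed form.
-/

open Real Set intervalIntegral MeasureTheory

lemma intervalIntegrable_div_sqrt_sub {g : ℝ → ℝ} {p a : ℝ} (hpa : p ≤ a)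
    (hg : ContinuousOn g (uIcc p a)) :
    IntervalIntegrable (fun φ => g φ / √(a - φ)) volume p a := by
  have hrpow : IntervalIntegrable (fun φ : ℝ => (a - φ) ^ (-(1/2) : ℝ)) volume p a := by
    simpa using ((intervalIntegrable_rpow' (a := a - a) (b := a - p)
      (by norm_num : (-1:ℝ) < -(1/2))).comp_sub_left a).symm
  refine (hrpow.continuousOn_mul hg).congr fun φ hφ => ?_
  rw [uIoc_of_le hpa] at hφ
  rw [rpow_neg (sub_nonneg.2 hφ.2), ← sqrt_eq_rpow, div_eq_mul_inv]

section
variable {a b : ℝ}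

lemma sqrt_sub_mul_sub_of_le {φ : ℝ} (hφ : φ ≤ a) :
    √((φ - a) * (φ - b)) = √(a - φ) * √(b - φ) := by
  rw [← sqrt_mul (sub_nonneg.2 hφ)]
  ring_nf

lemma sub_mul_sub_pos (hab : a ≤ b) {x : ℝ} (hx : x < a) : 0 < (x - a) * (x - b) :=
  mul_pos_of_neg_of_neg (by linarith) (by linarith)

lemma hasDerivAt_sqrt_sub_mul_sub (hab : a ≤ b) {x : ℝ} (hx : x < a) :
    HasDerivAt (fun φ => √((φ - a) * (φ - b))) ((x - (a + b) / 2) / √((x - a) * (x - b))) x := by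
  have hQ : HasDerivAt (fun φ : ℝ => (φ - a) * (φ - b)) ((x - b) + (x - a)) x :=
    (((hasDerivAt_id x).sub_const a).mul ((hasDerivAt_id x).sub_const b)).congr_deriv
      (by simp only [id, one_mul, mul_one])
  refine (hQ.sqrt (sub_mul_sub_pos hab hx).ne').congr_deriv ?_
  field_simp
  ring

lemma hasDerivAt_log_midpoint_sub_add_sqrt (hab : a ≤ b) {x : ℝ} (hx : x < a) :
    HasDerivAt (fun φ => log ((a + b) / 2 - φ + √((φ - a) * (φ - b))))
      (-1 / √((x - a) * (x - b))) x := by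
  have hu := sqrt_pos.2 (sub_mul_sub_pos hab hx)
  have hw : 0 < (a + b) / 2 - x + √((x - a) * (x - b)) := by linarith
  refine ((((hasDerivAt_id x).const_sub _).add (hasDerivAt_sqrt_sub_mul_sub hab hx)).log
    hw.ne').congr_deriv ?_
  simp only [Pi.add_apply, id]
  rw [div_eq_iff hw.ne']
  field_simp
  ring

end

noncomputable def radicalPrimitive (a b c φ : ℝ) : ℝ :=
  (c - 3 / 2 * ((a + b) / 2) - φ / 2) * √((φ - a) * (φ - b))
    + (-(a * b) / 2 - (c - 3 / 2 * ((a + b) / 2)) * ((a + b) / 2))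
      * log ((a + b) / 2 - φ + √((φ - a) * (φ - b)))

section
variable {a b : ℝ} (c : ℝ)

lemma hasDerivAt_radicalPrimitive (hab : a ≤ b) {x : ℝ} (hx : x < a) :
    HasDerivAt (radicalPrimitive a b c) (x * (c - x) / √((x - a) * (x - b))) x := by
  have hu := sqrt_pos.2 (sub_mul_sub_pos hab hx)
  have hu2 := sq_sqrt (sub_mul_sub_pos hab hx).le
  refine ((((hasDerivAt_id x).div_const 2).const_sub _).mul
    (hasDerivAt_sqrt_sub_mul_sub hab hx) |>.add
    ((hasDerivAt_log_midpoint_sub_add_sqrt hab hx).const_mul _)).congr_deriv ?_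
  simp only [id]
  field_simp
  rw [hu2]
  ring

lemma continuousOn_radicalPrimitive (hab : a < b) :
    ContinuousOn (radicalPrimitive a b c) (Iic a) := by
  refine ContinuousOn.add (by fun_prop) (continuousOn_const.mul (ContinuousOn.log (by fun_prop)
    fun φ hφ => ?_))
  have := sqrt_nonneg ((φ - a) * (φ - b))
  have : φ ≤ a := hφ
  linarith

lemma radicalPrimitive_self :
    radicalPrimitive a b c a
      = (-(a * b) / 2 - (c - 3 / 2 * ((a + b) / 2)) * ((a + b) / 2)) * log ((b - a) / 2) := by
  simp only [radicalPrimitive, sub_self, zero_mul, sqrt_zero, mul_zero, add_zero, zero_add]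
  ring_nf

lemma integral_mul_sub_div_sqrt {p : ℝ} (hpa : p ≤ a) (hab : a < b) :
    ∫ φ in p..a, φ * (c - φ) / √((φ - a) * (φ - b))
      = radicalPrimitive a b c a - radicalPrimitive a b c p := by
  have hint : IntervalIntegrable (fun φ => φ * (c - φ) / √((φ - a) * (φ - b))) volume p a := by
    refine (intervalIntegrable_div_sqrt_sub hpa (g := fun φ => φ * (c - φ) / √(b - φ))
      (ContinuousOn.div (by fun_prop) (by fun_prop) fun φ hφ => ?_)).congr fun φ hφ => ?_
    · rw [uIcc_of_le hpa] at hφ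
      exact sqrt_ne_zero'.2 (by linarith [hφ.2])
    · rw [uIoc_of_le hpa] at hφ
      simp only [sqrt_sub_mul_sub_of_le hφ.2, div_div, mul_comm]
  exact integral_eq_sub_of_hasDerivAt_of_le hpa
    ((continuousOn_radicalPrimitive c hab).mono Icc_subset_Iic_self)
    (fun x hx => hasDerivAt_radicalPrimitive c hab.le hx.2) hint

end

/-- Closed-form evaluation of the integral giving `Q(φ₀) = ∫ φ₀²` for the
smooth solitary wave of the Fornberg–Whitham equation with speed `c ∈ (1, 4/3)`
and zero background, with `φ₋ = 2c − 4/3 − (2/3)√(4 − 3c)` and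
`φ₊ = 2c − 4/3 + (2/3)√(4 − 3c)`. -/
theorem stmt16 (c : ℝ) (hc : c ∈ Set.Ioo (1:ℝ) (4/3)) :
    4 * ∫ φ in (0:ℝ)..(2*c - 4/3 - (2/3)*sqrt (4 - 3*c)),
        φ * (c - φ) / sqrt ((φ - (2*c - 4/3 - (2/3)*sqrt (4 - 3*c)))
          * (φ - (2*c - 4/3 + (2/3)*sqrt (4 - 3*c))))
      = 16*(c-1)*sqrt (c*(c-1))
        + (8/3)*(c-1)*(4-3*c)*log ((3*c - 2 + 3*sqrt (c*(c-1)))/sqrt (4 - 3*c)) := by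
  obtain ⟨hc1, hc2⟩ := hc
  set s := √(4 - 3 * c)
  set r := √(c * (c - 1))
  have hs : s ^ 2 = 4 - 3 * c := sq_sqrt (by linarith)
  have hs_pos : 0 < s := sqrt_pos.2 (by linarith)
  have hr : r ^ 2 = c * (c - 1) := sq_sqrt (by nlinarith)
  have hr_pos : 0 < r := sqrt_pos.2 (by nlinarith)
  have hs_lt : s < 3 * c - 2 := by nlinarith
  set a := 2 * c - 4 / 3 - 2 / 3 * s with ha
  set b := 2 * c - 4 / 3 + 2 / 3 * s with hb
  have ha_pos : 0 < a := by linarith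
  have hab : a < b := by linarith
  have hmid : (a + b) / 2 = 2 * c - 4 / 3 := by ring
  have hhalf : (b - a) / 2 = 2 / 3 * s := by ring
  have hprod : a * b = (2 * r) ^ 2 := by linear_combination (-4/9 : ℝ) * hs - 4 * hr
  rw [integral_mul_sub_div_sqrt c ha_pos.le hab, radicalPrimitive_self, radicalPrimitive,
    zero_sub, zero_sub, neg_mul_neg, hprod, sqrt_sq (by positivity), hmid, hhalf, sub_zero,
    show (3 * c - 2 + 3 * r) / s = (2 * c - 4 / 3 + 2 * r) / (2 / 3 * s) by field_simp; ring,
    log_div (by linarith) (by positivity)]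
  linear_combination (8 * (log (2 * c - 4 / 3 + 2 * r) - log (2 / 3 * s))) * hr
end

section
/- Define Qf : (1, 4/3) → ℝ by Qf(c) = 16(c−1)√(c(c−1)) + (8/3)(c−1)(4−3c)·ln((3c − 2 + 3√(c(c−1)))/√(4 − 3c)). Then Qf is differentiable on (1, 4/3) and its derivative is Qf′(c) = 28√(c(c−1)) + (8/3)(7−6c)·ln((3c − 2 + 3√(c(c−1)))/√(4 − 3c)). -/
open Real Set

/-!
Differentiate term by term. Writing `s = √(c(c-1))`, the logarithm has derivative
`3(2-c) / (2s(4-3c))`, so the factor `4-3c` cancels against the polynomial in front of it, and all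
the terms without a logarithm collapse to `16s + 12c(c-1)/s = 28s`.
-/

lemma hasDerivAt_sqrt_mul_sub_one {c : ℝ} (hc : 0 < c * (c - 1)) :
    HasDerivAt (fun x : ℝ => √(x * (x - 1))) ((2 * c - 1) / (2 * √(c * (c - 1)))) c := by
  have hp : HasDerivAt (fun x : ℝ => x * (x - 1)) (2 * c - 1) c :=
    ((hasDerivAt_id' c).mul ((hasDerivAt_id' c).sub_const 1)).congr_deriv (by ring)
  exact hp.sqrt hc.ne'

lemma hasDerivAt_sqrt_four_sub_three_mul {c : ℝ} (hc : c < 4 / 3) :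
    HasDerivAt (fun x : ℝ => √(4 - 3 * x)) (-3 / (2 * √(4 - 3 * c))) c := by
  have hq : HasDerivAt (fun x : ℝ => 4 - 3 * x) (-3) c :=
    (((hasDerivAt_id' c).const_mul 3).const_sub 4).congr_deriv (by ring)
  exact hq.sqrt (by linarith)

lemma hasDerivAt_log_charge_ratio {c : ℝ} (hc₁ : 1 < c) (hc₂ : c < 4 / 3) :
    HasDerivAt (fun x : ℝ => log ((3 * x - 2 + 3 * √(x * (x - 1))) / √(4 - 3 * x)))
      (3 * (2 - c) / (2 * √(c * (c - 1)) * (4 - 3 * c))) c := by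
  have hcc : 0 < c * (c - 1) := mul_pos (by linarith) (by linarith)
  have hq : 0 < 4 - 3 * c := by linarith
  have hs : 0 < √(c * (c - 1)) := sqrt_pos.mpr hcc
  have ht : 0 < √(4 - 3 * c) := sqrt_pos.mpr hq
  have hN : 0 < 3 * c - 2 + 3 * √(c * (c - 1)) := by linarith
  have hNum := (((hasDerivAt_id' c).const_mul 3).sub_const 2).add
    ((hasDerivAt_sqrt_mul_sub_one hcc).const_mul 3)
  refine ((hNum.div (hasDerivAt_sqrt_four_sub_three_mul hc₂) ht.ne').log
    (div_pos hN ht).ne').congr_deriv ?_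
  have hs2 := sq_sqrt hcc.le
  have ht2 := sq_sqrt hq.le
  simp only [Pi.add_apply, Pi.div_apply]
  field_simp
  rw [ht2]
  linear_combination 3 * (4 - 3 * c) * hs2

/-- The closed-form charge
`Qf(c) = 16(c−1)√(c(c−1)) + (8/3)(c−1)(4−3c)·log((3c−2+3√(c(c−1)))/√(4−3c))`
is differentiable on `(1, 4/3)` with derivative
`Qf′(c) = 28√(c(c−1)) + (8/3)(7−6c)·log((3c−2+3√(c(c−1)))/√(4−3c))`. -/
theorem stmt17 :
    ∀ c ∈ Ioo (1:ℝ) (4/3),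
      HasDerivAt (fun c : ℝ => 16*(c-1)*sqrt (c*(c-1))
          + (8/3)*(c-1)*(4-3*c)*log ((3*c - 2 + 3*sqrt (c*(c-1)))/sqrt (4 - 3*c)))
        (28*sqrt (c*(c-1))
          + (8/3)*(7-6*c)*log ((3*c - 2 + 3*sqrt (c*(c-1)))/sqrt (4 - 3*c))) c := by
  rintro c ⟨hc₁, hc₂⟩
  have hcc : 0 < c * (c - 1) := mul_pos (by linarith) (by linarith)
  have hs : √(c * (c - 1)) ≠ 0 := (sqrt_pos.mpr hcc).ne'
  have hs2 := sq_sqrt hcc.le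
  have hSqrtTerm := ((hasDerivAt_id' c).sub_const 1 |>.const_mul 16).mul
    (hasDerivAt_sqrt_mul_sub_one hcc)
  have hLogTerm := ((hasDerivAt_id' c).sub_const 1 |>.const_mul (8 / 3)).mul
    (((hasDerivAt_id' c).const_mul 3).const_sub 4) |>.mul (hasDerivAt_log_charge_ratio hc₁ hc₂)
  refine (hSqrtTerm.add hLogTerm).congr_deriv ?_
  have hcancel : 8 / 3 * (c - 1) * (4 - 3 * c) * (3 * (2 - c) / (2 * √(c * (c - 1)) * (4 - 3 * c)))
      = 4 * (c - 1) * (2 - c) / √(c * (c - 1)) := by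
    have hq : 4 - 3 * c ≠ 0 := by linarith
    field_simp
    ring
  simp only [Pi.mul_apply, hcancel]
  field_simp
  linear_combination (-72) * hs2
end
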